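/- arXiv:1006.5876 — 6 statements merged into one kernel-verified Lean document; each statement's English description precedes it below -/
import Mathlib

section
/- With the same setup, the minimum eigenvalue of P_m is at most p(θ) for every real θ. -/
open Matrix Real Complex Finset

/-- The trigonometric polynomial `p(θ) = p₀ + Σ_{k=1}^n 2 p_k cos(kθ)`. -/
noncomputable def trigPoly (n : ℕ) (p : ℕ → ℝ) (θ : ℝ) : ℝ :=
  p 0 + ∑ k ∈ Finset.Icc 1 n, 2 * p k * Real.cos (k * θ)

/-- The `m × m` weighted symmetric banded Toeplitz matrix with `(j,k)` entry
`(m/(m-|j-k|)) p_{|j-k|}` for `|j-k| ≤ n`, else `0`. -/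
noncomputable def Pmat (n m : ℕ) (p : ℕ → ℝ) : Matrix (Fin m) (Fin m) ℝ :=
  fun j k =>
    if ((j : ℤ) - (k : ℤ)).natAbs ≤ n then
      ((m : ℝ) / ((m : ℝ) - (((j : ℤ) - (k : ℤ)).natAbs : ℝ))) * p ((( j : ℤ) - (k : ℤ)).natAbs)
    else 0

/-!
Testing the Rayleigh bound `λ_min ‖v‖² ≤ vᵀ P_m v` on the vectors `(cos jθ)_j` and `(sin jθ)_j` and
adding gives `λ_min · m ≤ Σ_{j,k} (P_m)_{jk} cos((j - k)θ)`. The `d`-th diagonal of `P_m` has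
`m - |d|` entries, and the weight `m/(m - |d|)` is chosen to cancel exactly that count, so the right
side is `m p(θ)`.
-/

open scoped MatrixOrder

theorem Matrix.IsHermitian.iInf_eigenvalues_mul_dotProduct_self_le {ι : Type*} [Fintype ι]
    [DecidableEq ι] {A : Matrix ι ι ℝ} (hA : A.IsHermitian) (v : ι → ℝ) :
    (⨅ i, hA.eigenvalues i) * (v ⬝ᵥ v) ≤ v ⬝ᵥ A *ᵥ v := by
  have hle : algebraMap ℝ (Matrix ι ι ℝ) (⨅ i, hA.eigenvalues i) ≤ A := by
    refine algebraMap_le_of_le_spectrum (fun x hx => ?_) hA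
    obtain ⟨i, rfl⟩ := hA.spectrum_real_eq_range_eigenvalues ▸ hx
    exact ciInf_le (Set.finite_range _).bddBelow i
  simpa [sub_mulVec, Algebra.algebraMap_eq_smul_one, smul_mulVec] using
    (Matrix.le_iff.mp hle).dotProduct_mulVec_nonneg v

theorem dotProduct_cos_add_dotProduct_sin {ι : Type*} [Fintype ι] (φ : ι → ℝ) :
    (Real.cos ∘ φ) ⬝ᵥ (Real.cos ∘ φ) + (Real.sin ∘ φ) ⬝ᵥ (Real.sin ∘ φ) = Fintype.card ι := by
  simp [dotProduct, ← sum_add_distrib, ← sq]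

theorem dotProduct_mulVec_cos_add_dotProduct_mulVec_sin {ι : Type*} [Fintype ι]
    (A : Matrix ι ι ℝ) (φ : ι → ℝ) :
    (Real.cos ∘ φ) ⬝ᵥ A *ᵥ (Real.cos ∘ φ) + (Real.sin ∘ φ) ⬝ᵥ A *ᵥ (Real.sin ∘ φ) =
      ∑ j, ∑ k, A j k * Real.cos (φ j - φ k) := by
  simp only [dotProduct, mulVec, Function.comp_apply, mul_sum, ← sum_add_distrib, Real.cos_sub]
  exact sum_congr rfl fun j _ => sum_congr rfl fun k _ => by ring

theorem Matrix.IsHermitian.iInf_eigenvalues_mul_card_le {ι : Type*} [Fintype ι]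
    [DecidableEq ι] {A : Matrix ι ι ℝ} (hA : A.IsHermitian) (φ : ι → ℝ) :
    (⨅ i, hA.eigenvalues i) * Fintype.card ι ≤ ∑ j, ∑ k, A j k * Real.cos (φ j - φ k) := by
  rw [← dotProduct_cos_add_dotProduct_sin φ, mul_add,
    ← dotProduct_mulVec_cos_add_dotProduct_mulVec_sin]
  exact add_le_add (hA.iInf_eigenvalues_mul_dotProduct_self_le _)
    (hA.iInf_eigenvalues_mul_dotProduct_self_le _)

theorem sum_range_sum_range_intCast_sub {M : Type*} [AddCommMonoid M] (m : ℕ) (f : ℤ → M) :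
    ∑ j ∈ range m, ∑ k ∈ range m, f ((j : ℤ) - k) =
      ∑ d ∈ Ioo (-(m : ℤ)) m, (m - d.natAbs) • f d := by
  have column (k : ℕ) (hk : k ∈ range m) : ∑ j ∈ range m, f ((j : ℤ) - k) =
      ∑ d ∈ Ioo (-(m : ℤ)) m, if 0 ≤ k + d ∧ k + d < m then f d else 0 := by
    rw [mem_range] at hk
    rw [← sum_filter]
    refine sum_nbij' (fun j => (j : ℤ) - k) (fun d => (k + d).toNat) ?_ ?_ ?_ ?_ fun _ _ => rfl <;>
      simp only [mem_range, mem_filter, mem_Ioo] <;> omega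
  rw [sum_comm, sum_congr rfl column, sum_comm]
  refine sum_congr rfl fun d hd => ?_
  rw [← sum_filter, sum_const]
  congr 1
  have hcount : (range m).filter (fun k : ℕ => 0 ≤ (k : ℤ) + d ∧ (k : ℤ) + d < m) =
      Ico (-d).toNat (m - d.toNat) := by
    ext k; simp only [mem_filter, mem_range, mem_Ico]; omega
  rw [hcount, Nat.card_Ico]
  simp only [mem_Ioo] at hd
  omega

theorem sum_Icc_natAbs_mul_cos (n : ℕ) (p : ℕ → ℝ) (θ : ℝ) :
    ∑ d ∈ Icc (-(n : ℤ)) n, p d.natAbs * Real.cos (d * θ) = trigPoly n p θ := by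
  have heven : Function.Even fun d : ℤ => p d.natAbs * Real.cos (d * θ) := fun d => by
    simp [Real.cos_neg]
  rw [sum_Icc_of_even_eq_range heven, range_eq_Ico, sum_eq_sum_Ico_succ_bot n.add_one_pos,
    Ico_add_one_right_eq_Icc]
  simp only [trigPoly, mul_assoc, ← mul_sum, Int.natAbs_natCast, Int.cast_natCast, Nat.cast_zero,
    Int.cast_zero, Int.natAbs_zero, zero_mul, Real.cos_zero, zero_add]
  ring

noncomputable def pmatCoeff (n m : ℕ) (p : ℕ → ℝ) (d : ℤ) : ℝ :=
  if d.natAbs ≤ n then (m : ℝ) / ((m : ℝ) - d.natAbs) * p d.natAbs else 0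

theorem Pmat_apply (n m : ℕ) (p : ℕ → ℝ) (j k : Fin m) :
    Pmat n m p j k = pmatCoeff n m p ((j : ℤ) - k) := rfl

theorem nsmul_pmatCoeff {n m : ℕ} (p : ℕ → ℝ) {d : ℤ} (hd : d.natAbs < m) :
    (m - d.natAbs) • pmatCoeff n m p d = if d.natAbs ≤ n then m * p d.natAbs else 0 := by
  have : (m : ℝ) - d.natAbs ≠ 0 := sub_ne_zero.mpr (by exact_mod_cast hd.ne')
  unfold pmatCoeff
  split_ifs
  · rw [nsmul_eq_mul, Nat.cast_sub hd.le]; field_simp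
  · simp

theorem sum_Pmat_mul_cos {n m : ℕ} (hmn : n < m) (p : ℕ → ℝ) (θ : ℝ) :
    ∑ j : Fin m, ∑ k : Fin m, Pmat n m p j k * Real.cos (j * θ - k * θ) = m * trigPoly n p θ := by
  set F : ℤ → ℝ := fun d => pmatCoeff n m p d * Real.cos (d * θ)
  have hF (j k : ℕ) :
      F ((j : ℤ) - k) = pmatCoeff n m p ((j : ℤ) - k) * Real.cos (j * θ - k * θ) := by
    simp only [F]; push_cast; ring_nf
  have hband : (Ioo (-(m : ℤ)) m).filter (fun d => d.natAbs ≤ n) = Icc (-(n : ℤ)) n := by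
    ext d; simp only [mem_filter, mem_Ioo, mem_Icc]; omega
  calc ∑ j : Fin m, ∑ k : Fin m, Pmat n m p j k * Real.cos (j * θ - k * θ)
      = ∑ j ∈ range m, ∑ k ∈ range m, F ((j : ℤ) - k) := by
        simp only [Pmat_apply, ← hF]
        rw [← Fin.sum_univ_eq_sum_range (fun j => ∑ k ∈ range m, F ((j : ℤ) - k))]
        simp only [← Fin.sum_univ_eq_sum_range (fun k => F (_ - (k : ℤ)))]
    _ = ∑ d ∈ Ioo (-(m : ℤ)) m,
          if d.natAbs ≤ n then m * (p d.natAbs * Real.cos (d * θ)) else 0 := by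
        rw [sum_range_sum_range_intCast_sub]
        refine sum_congr rfl fun d hd => ?_
        rw [mem_Ioo] at hd
        simp only [F, ← smul_mul_assoc, nsmul_pmatCoeff p (show d.natAbs < m by omega)]
        split_ifs <;> ring
    _ = m * trigPoly n p θ := by
        rw [← sum_filter, hband, ← mul_sum, sum_Icc_natAbs_mul_cos]

/-- The minimum eigenvalue of `P_m` is at most `p(θ)` for every `θ`. -/
theorem stmt1 (n m : ℕ) (hmn : n < m) (p : ℕ → ℝ)
    (hA : (Pmat n m p).IsHermitian) (θ : ℝ) :
    (⨅ i : Fin m, hA.eigenvalues i) ≤ trigPoly n p θ := by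
  have hm : (0 : ℝ) < m := by exact_mod_cast (Nat.zero_le n).trans_lt hmn
  have hbound := hA.iInf_eigenvalues_mul_card_le fun j => j * θ
  rw [sum_Pmat_mul_cos hmn, Fintype.card_fin, mul_comm] at hbound
  exact le_of_mul_le_mul_left hbound hm
end

section
/- As m → ∞, the minimum eigenvalue of the weighted Toeplitz matrix P_m converges to the minimum of p over the circle: lim_{m→∞} λ_min(P_m) = min_θ p(θ). -/
open Matrix Real Finset Filter Topology

open ComplexConjugate

/-! The weight `m / (m - |d|)` in `P_m` exactly compensates the number `m - |d|` of entries on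
the `d`-th diagonal, so testing `P_m` against the real and imaginary parts of `(e^{ijθ})_j` gives
the Rayleigh quotient `p(θ)`: hence `λ_min(P_m) ≤ min p`.

Conversely, for the unweighted banded Toeplitz matrix `R_q` with symbol `q`, sampling at the
`N`-th roots of unity with `N > m + n` (so that no aliasing occurs) gives
`N ⟪x, R_q x⟫ = Σ_l q(2πl/N) |x̂(l)|²` and `N ‖x‖² = Σ_l |x̂(l)|²`,
hence `R_q ≥ min q`.
Since `P_m = R_w` with `w_d = m p_d / (m - d)`, a symbol within `O(1/m)` of `p`, this yields
`λ_min(P_m) ≥ min p - O(1/m)`. -/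

lemma Finset.sum_Icc_neg_eq_add_sum_Icc_one {M : Type*} [AddCommMonoid M] (f : ℤ → M)
    (n : ℕ) :
    ∑ d ∈ Icc (-(n : ℤ)) n, f d = f 0 + ∑ k ∈ Icc 1 n, (f k + f (-k)) := by
  induction n with
  | zero => simp
  | succ n ih =>
    have hIcc : Icc (-((n + 1 : ℕ) : ℤ)) (n + 1 : ℕ)
        = insert ((n : ℤ) + 1) (insert (-((n : ℤ) + 1)) (Icc (-(n : ℤ)) n)) := by
      ext d; simp only [mem_Icc, mem_insert]; omega
    rw [hIcc, sum_insert (by simp only [mem_insert, mem_Icc]; omega),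
      sum_insert (by simp only [mem_Icc]; omega), ih, sum_Icc_succ_top (by omega)]
    push_cast
    abel

lemma trigPoly_eq_sum_cos (n : ℕ) (p : ℕ → ℝ) (θ : ℝ) :
    trigPoly n p θ = ∑ d ∈ Icc (-(n : ℤ)) n, p d.natAbs * cos (d * θ) := by
  rw [sum_Icc_neg_eq_add_sum_Icc_one, trigPoly]
  congr 1
  · simp
  · refine sum_congr rfl fun k _ => ?_
    push_cast
    rw [neg_mul, cos_neg]
    simp only [Int.natAbs_neg, Int.natAbs_natCast]
    ring

lemma ofReal_trigPoly_eq_sum_exp (n : ℕ) (p : ℕ → ℝ) (θ : ℝ) :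
    (trigPoly n p θ : ℂ)
      = ∑ d ∈ Icc (-(n : ℤ)) n, (p d.natAbs : ℂ) * Complex.exp (d * θ * Complex.I) := by
  rw [sum_Icc_neg_eq_add_sum_Icc_one, trigPoly]
  push_cast
  congr 1
  · simp
  · refine sum_congr rfl fun k _ => ?_
    simp only [Int.natAbs_neg, Int.natAbs_natCast]
    rw [mul_right_comm, Complex.two_cos, neg_mul, neg_mul, neg_mul]
    ring

lemma abs_trigPoly_le (n : ℕ) (p : ℕ → ℝ) (θ : ℝ) :
    |trigPoly n p θ| ≤ ∑ d ∈ Icc (-(n : ℤ)) n, |p d.natAbs| := by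
  rw [trigPoly_eq_sum_cos]
  refine (abs_sum_le_sum_abs _ _).trans (sum_le_sum fun d _ => ?_)
  rw [abs_mul]
  exact mul_le_of_le_one_right (abs_nonneg _) (abs_cos_le_one _)

lemma trigPoly_sub (n : ℕ) (p q : ℕ → ℝ) (θ : ℝ) :
    trigPoly n p θ - trigPoly n q θ = trigPoly n (p - q) θ := by
  simp only [trigPoly, Pi.sub_apply, sub_mul, mul_sub, sum_sub_distrib]
  ring

lemma Finset.card_filter_fin_sub_eq (m : ℕ) (d : ℤ) :
    #{jk : Fin m × Fin m | (jk.1 : ℤ) - jk.2 = d} = m - d.natAbs := by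
  rw [← card_range (m - d.natAbs)]
  refine card_bij' (fun jk _ => (jk.1 : ℕ) - d.toNat)
    (fun i hi => (⟨i + d.toNat, by grind⟩, ⟨i + (-d).toNat, by grind⟩)) ?_ ?_ ?_ ?_
  · intro jk hjk
    simp only [mem_filter, mem_univ, true_and] at hjk
    simp only [mem_range]
    omega
  · intro i hi
    simp only [mem_filter, mem_univ, true_and]
    omega
  · intro jk hjk
    simp only [mem_filter, mem_univ, true_and] at hjk
    ext <;> simp <;> omega
  · intro i _
    simp

lemma Finset.sum_fin_sub_eq_sum_Icc {M : Type*} [AddCommMonoid M] {n : ℕ} (m : ℕ)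
    (f : ℤ → M) (hf : ∀ d, n < d.natAbs → f d = 0) :
    ∑ j : Fin m, ∑ k : Fin m, f (j - k)
      = ∑ d ∈ Icc (-(n : ℤ)) n, (m - d.natAbs) • f d := by
  have hsupp (j k : Fin m) :
      f (j - k) = ∑ d ∈ Icc (-(n : ℤ)) n, if (j : ℤ) - k = d then f d else 0 := by
    rw [sum_ite_eq]
    split_ifs with h
    · rfl
    · exact hf ((j : ℤ) - k) (by simp only [mem_Icc] at h; omega)
  simp_rw [hsupp, ← Fintype.sum_prod_type']
  rw [sum_comm]
  refine sum_congr rfl fun d _ => ?_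
  rw [← sum_filter, sum_const, card_filter_fin_sub_eq]

namespace Matrix.IsHermitian
variable {ι : Type*} [Fintype ι] [DecidableEq ι] {A : Matrix ι ι ℝ}

lemma dotProduct_mulVec_eq_sum_eigenvalues (hA : A.IsHermitian) (x : ι → ℝ) :
    x ⬝ᵥ A *ᵥ x = ∑ i, hA.eigenvalues i * (x ⬝ᵥ hA.eigenvectorBasis i) ^ 2 := by
  have parseval :=
    hA.eigenvectorBasis.sum_inner_mul_inner (WithLp.toLp 2 x) (WithLp.toLp 2 (A *ᵥ x))
  simp only [EuclideanSpace.inner_eq_star_dotProduct, star_trivial] at parseval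
  rw [dotProduct_comm, ← parseval]
  refine Finset.sum_congr rfl fun i _ => ?_
  have hT : Aᵀ = A := by rw [← conjTranspose_eq_transpose_of_trivial]; exact hA.eq
  rw [dotProduct_comm (A *ᵥ x), dotProduct_mulVec, ← mulVec_transpose, hT,
    hA.mulVec_eigenvectorBasis, smul_dotProduct, smul_eq_mul, dotProduct_comm _ x]
  ring

lemma dotProduct_self_eq_sum_sq (hA : A.IsHermitian) (x : ι → ℝ) :
    x ⬝ᵥ x = ∑ i, (x ⬝ᵥ hA.eigenvectorBasis i) ^ 2 := by
  have parseval := hA.eigenvectorBasis.sum_inner_mul_inner (WithLp.toLp 2 x) (WithLp.toLp 2 x)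
  simp only [EuclideanSpace.inner_eq_star_dotProduct, star_trivial] at parseval
  rw [← parseval]
  simp only [sq, dotProduct_comm x]

lemma iInf_eigenvalues_mul_dotProduct_self_le_s4 (hA : A.IsHermitian) (x : ι → ℝ) :
    (⨅ i, hA.eigenvalues i) * (x ⬝ᵥ x) ≤ x ⬝ᵥ A *ᵥ x := by
  rw [hA.dotProduct_self_eq_sum_sq x, hA.dotProduct_mulVec_eq_sum_eigenvalues, Finset.mul_sum]
  exact Finset.sum_le_sum fun i _ => mul_le_mul_of_nonneg_right
    (ciInf_le (Set.finite_range _).bddBelow i) (sq_nonneg _)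

lemma eigenvectorBasis_dotProduct_self (hA : A.IsHermitian) (i : ι) :
    ⇑(hA.eigenvectorBasis i) ⬝ᵥ ⇑(hA.eigenvectorBasis i) = 1 := by
  have := real_inner_self_eq_norm_sq (hA.eigenvectorBasis i)
  rw [hA.eigenvectorBasis.orthonormal.1 i, one_pow,
    EuclideanSpace.inner_eq_star_dotProduct] at this
  simpa using this

lemma le_eigenvalues_of_forall_le_dotProduct (hA : A.IsHermitian) {c : ℝ}
    (h : ∀ x : ι → ℝ, c * (x ⬝ᵥ x) ≤ x ⬝ᵥ A *ᵥ x) (i : ι) :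
    c ≤ hA.eigenvalues i := by
  simpa [hA.eigenvalues_eq i, hA.eigenvectorBasis_dotProduct_self i] using
    h (hA.eigenvectorBasis i)

end Matrix.IsHermitian

noncomputable def bandedToeplitz (n m : ℕ) (q : ℕ → ℝ) : Matrix (Fin m) (Fin m) ℝ :=
  fun j k => if ((j : ℤ) - (k : ℤ)).natAbs ≤ n then q ((j : ℤ) - (k : ℤ)).natAbs else 0

lemma Pmat_eq_bandedToeplitz (n m : ℕ) (p : ℕ → ℝ) :
    Pmat n m p = bandedToeplitz n m (fun d => m / (m - d) * p d) := rfl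

lemma dotProduct_bandedToeplitz_cos_add_sin (n m : ℕ) (q : ℕ → ℝ) (θ : ℝ) :
    (fun j : Fin m => cos (j * θ)) ⬝ᵥ bandedToeplitz n m q *ᵥ (fun j => cos (j * θ))
      + (fun j : Fin m => sin (j * θ)) ⬝ᵥ bandedToeplitz n m q *ᵥ (fun j => sin (j * θ))
      = ∑ d ∈ Icc (-(n : ℤ)) n,
          ((m - d.natAbs : ℕ) : ℝ) * (q d.natAbs * cos (d * θ)) := by
  have hterm (j k : Fin m) : cos (j * θ) * (bandedToeplitz n m q j k * cos (k * θ))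
      + sin (j * θ) * (bandedToeplitz n m q j k * sin (k * θ))
      = if ((j : ℤ) - k).natAbs ≤ n then
          q ((j : ℤ) - k).natAbs * cos (((j : ℤ) - k : ℤ) * θ)
        else 0 := by
    rw [bandedToeplitz]
    split_ifs
    · push_cast
      rw [sub_mul, cos_sub]
      ring
    · ring
  simp only [dotProduct, mulVec, mul_sum, ← sum_add_distrib, hterm]
  rw [sum_fin_sub_eq_sum_Icc
    (f := fun d : ℤ => if d.natAbs ≤ n then q d.natAbs * cos (d * θ) else 0) m
    fun d hd => if_neg hd.not_ge]
  refine sum_congr rfl fun d hd => ?_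
  rw [if_pos (by simp only [mem_Icc] at hd; omega), nsmul_eq_mul]

lemma iInf_eigenvalues_Pmat_le_trigPoly {n m : ℕ} (hnm : n < m) (p : ℕ → ℝ)
    (hA : (Pmat n m p).IsHermitian) (θ : ℝ) :
    ⨅ i, hA.eigenvalues i ≤ trigPoly n p θ := by
  set u : Fin m → ℝ := fun j => cos (j * θ)
  set v : Fin m → ℝ := fun j => sin (j * θ)
  have hnorm : u ⬝ᵥ u + v ⬝ᵥ v = m := by
    simp [u, v, dotProduct, ← sum_add_distrib, ← sq]
  have hquad : u ⬝ᵥ Pmat n m p *ᵥ u + v ⬝ᵥ Pmat n m p *ᵥ v = m * trigPoly n p θ := by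
    rw [Pmat_eq_bandedToeplitz, dotProduct_bandedToeplitz_cos_add_sin, trigPoly_eq_sum_cos, mul_sum]
    refine sum_congr rfl fun d hd => ?_
    have hdm : (d.natAbs : ℝ) < m := by simp only [mem_Icc] at hd; exact_mod_cast (by omega)
    rw [Nat.cast_sub (by exact_mod_cast hdm.le), ← mul_assoc, ← mul_assoc,
      mul_div_cancel₀ _ (sub_pos.mpr hdm).ne', mul_assoc]
  have hm : (0 : ℝ) < m := by exact_mod_cast (by omega : 0 < m)
  refine le_of_mul_le_mul_left ?_ hm
  calc (m : ℝ) * ⨅ i, hA.eigenvalues i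
        = (⨅ i, hA.eigenvalues i) * (u ⬝ᵥ u + v ⬝ᵥ v) := by
        rw [hnorm, mul_comm]
    _ ≤ u ⬝ᵥ Pmat n m p *ᵥ u + v ⬝ᵥ Pmat n m p *ᵥ v := by
        rw [mul_add]
        exact add_le_add (hA.iInf_eigenvalues_mul_dotProduct_self_le_s4 u)
          (hA.iInf_eigenvalues_mul_dotProduct_self_le_s4 v)
    _ = m * trigPoly n p θ := hquad

lemma IsPrimitiveRoot.sum_range_zpow_pow {K : Type*} [Field K] {ζ : K} {N : ℕ}
    (hζ : IsPrimitiveRoot ζ N) (t : ℤ) :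
    ∑ l ∈ range N, (ζ ^ t) ^ l = if (N : ℤ) ∣ t then (N : K) else 0 := by
  split_ifs with h
  · simp [(hζ.zpow_eq_one_iff_dvd t).mpr h]
  · have hne : ζ ^ t ≠ 1 := fun h' => h ((hζ.zpow_eq_one_iff_dvd t).mp h')
    rw [geom_sum_eq hne, ← zpow_natCast, ← _root_.zpow_mul, mul_comm, _root_.zpow_mul,
      zpow_natCast, hζ.pow_eq_one, _root_.one_zpow, sub_self, zero_div]

noncomputable def dft {m : ℕ} (ζ : ℂ) (x : Fin m → ℝ) (l : ℕ) : ℂ :=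
  ∑ j, (x j : ℂ) * (ζ ^ (j : ℤ)) ^ l

lemma IsPrimitiveRoot.normSq_dft {ζ : ℂ} {N m : ℕ} (hζ : IsPrimitiveRoot ζ N) (hN : N ≠ 0)
    (x : Fin m → ℝ) (l : ℕ) :
    (Complex.normSq (dft ζ x l) : ℂ)
      = ∑ j, ∑ k, (x j : ℂ) * x k * (ζ ^ ((k : ℤ) - j)) ^ l := by
  have hconj : conj ζ = ζ⁻¹ := (Complex.inv_eq_conj (hζ.norm'_eq_one hN)).symm
  rw [Complex.normSq_eq_conj_mul_self, dft, map_sum, sum_mul_sum]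
  refine sum_congr rfl fun j _ => sum_congr rfl fun k _ => ?_
  simp only [map_mul, map_pow, map_zpow₀, Complex.conj_ofReal, hconj,
    zpow_sub₀ (hζ.ne_zero hN),
    _root_.inv_zpow, div_eq_mul_inv]
  ring

lemma IsPrimitiveRoot.sum_range_zpow_pow_of_mem_Icc {ζ : ℂ} {N m n : ℕ}
    (hζ : IsPrimitiveRoot ζ N) (hN : m + n < N) {d : ℤ} (hd : d ∈ Icc (-(n : ℤ)) n)
    (j k : Fin m) :
    ∑ l ∈ range N, (ζ ^ (d + (k - j))) ^ l = if (j : ℤ) - k = d then (N : ℂ) else 0 := by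
  rw [hζ.sum_range_zpow_pow]
  congr 1
  simp only [mem_Icc] at hd
  refine propext ⟨fun hdvd => ?_, fun h => by simp [← h]⟩
  have := Int.eq_zero_of_abs_lt_dvd hdvd (by rw [abs_lt]; omega)
  omega

lemma IsPrimitiveRoot.sum_mul_normSq_dft {ζ : ℂ} {N m n : ℕ} (hζ : IsPrimitiveRoot ζ N)
    (hN : m + n < N) (q : ℕ → ℝ) (x : Fin m → ℝ) :
    ∑ l ∈ range N, (∑ d ∈ Icc (-(n : ℤ)) n, (q d.natAbs : ℂ) * (ζ ^ d) ^ l)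
        * Complex.normSq (dft ζ x l)
      = N * ((x ⬝ᵥ bandedToeplitz n m q *ᵥ x : ℝ) : ℂ) := by
  have hN0 : N ≠ 0 := by omega
  have hkernel (j k : Fin m) :
      ∑ l ∈ range N, (∑ d ∈ Icc (-(n : ℤ)) n, (q d.natAbs : ℂ) * (ζ ^ d) ^ l)
          * (ζ ^ ((k : ℤ) - j)) ^ l
        = N * bandedToeplitz n m q j k := by
    simp_rw [sum_mul, mul_assoc, ← mul_pow, ← zpow_add₀ (hζ.ne_zero hN0)]
    rw [sum_comm]
    simp_rw [← mul_sum]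
    rw [sum_congr rfl fun d hd => congrArg _ (hζ.sum_range_zpow_pow_of_mem_Icc hN hd j k)]
    simp only [mul_ite, mul_zero, sum_ite_eq, mem_Icc, bandedToeplitz]
    split_ifs <;> first | omega | (push_cast; ring)
  simp_rw [hζ.normSq_dft hN0, mul_sum]
  rw [sum_comm]
  simp only [dotProduct, mulVec, Complex.ofReal_sum, Complex.ofReal_mul, mul_sum]
  refine sum_congr rfl fun j _ => ?_
  rw [sum_comm]
  refine sum_congr rfl fun k _ => ?_
  simp_rw [mul_left_comm _ ((x j : ℂ) * x k)]
  rw [← mul_sum, hkernel]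
  ring

lemma ofReal_trigPoly_two_pi_mul_div (n N : ℕ) (q : ℕ → ℝ) (l : ℕ) :
    (trigPoly n q (2 * π * l / N) : ℂ)
      = ∑ d ∈ Icc (-(n : ℤ)) n,
          (q d.natAbs : ℂ) * (Complex.exp (2 * π * Complex.I / N) ^ d) ^ l := by
  rw [ofReal_trigPoly_eq_sum_exp]
  refine sum_congr rfl fun d _ => ?_
  rw [← Complex.exp_int_mul, ← Complex.exp_nat_mul]
  push_cast
  ring_nf

lemma sum_trigPoly_mul_normSq_dft {N m n : ℕ} (hN : m + n < N) (q : ℕ → ℝ)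
    (x : Fin m → ℝ) :
    ∑ l ∈ range N, trigPoly n q (2 * π * l / N)
        * Complex.normSq (dft (Complex.exp (2 * π * Complex.I / N)) x l)
      = N * (x ⬝ᵥ bandedToeplitz n m q *ᵥ x) := by
  have h := (Complex.isPrimitiveRoot_exp N (by omega)).sum_mul_normSq_dft hN q x
  simp_rw [← ofReal_trigPoly_two_pi_mul_div] at h
  exact_mod_cast h

lemma bandedToeplitz_zero_one (m : ℕ) : bandedToeplitz 0 m (fun _ => 1) = 1 := by
  ext j k
  simp only [bandedToeplitz, nonpos_iff_eq_zero, Int.natAbs_eq_zero, sub_eq_zero, Nat.cast_inj,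
    Fin.val_inj, one_apply]

lemma sum_normSq_dft {N m : ℕ} (hN : m < N) (x : Fin m → ℝ) :
    ∑ l ∈ range N, Complex.normSq (dft (Complex.exp (2 * π * Complex.I / N)) x l)
      = N * (x ⬝ᵥ x) := by
  simpa [trigPoly, bandedToeplitz_zero_one] using
    sum_trigPoly_mul_normSq_dft (n := 0) hN (fun _ => 1) x

lemma le_dotProduct_bandedToeplitz {n m : ℕ} {q : ℕ → ℝ} {c : ℝ}
    (hc : ∀ θ, c ≤ trigPoly n q θ) (x : Fin m → ℝ) :
    c * (x ⬝ᵥ x) ≤ x ⬝ᵥ bandedToeplitz n m q *ᵥ x := by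
  have hN : (0 : ℝ) < (m + n + 1 : ℕ) := by positivity
  refine le_of_mul_le_mul_left ?_ hN
  rw [← sum_trigPoly_mul_normSq_dft (by omega), mul_left_comm, ← sum_normSq_dft (by omega),
    mul_sum]
  exact sum_le_sum fun l _ => mul_le_mul_of_nonneg_right (hc _) (Complex.normSq_nonneg _)

lemma bddBelow_range_trigPoly (n : ℕ) (p : ℕ → ℝ) : BddBelow (Set.range (trigPoly n p)) :=
  ⟨-∑ d ∈ Icc (-(n : ℤ)) n, |p d.natAbs|, by
    rintro _ ⟨θ, rfl⟩
    exact neg_le_of_abs_le (abs_trigPoly_le n p θ)⟩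

lemma abs_div_sub_mul_sub_self_le {n m e : ℕ} (hnm : n < m) (he : e ≤ n) (a : ℝ) :
    |m / (m - e) * a - a| ≤ n / (m - n) * |a| := by
  have hnm' : (n : ℝ) < m := by exact_mod_cast hnm
  have he' : (e : ℝ) ≤ n := by exact_mod_cast he
  have hme : (0 : ℝ) < m - e := by linarith
  rw [show (m : ℝ) / (m - e) * a - a = e / (m - e) * a by field_simp; ring, abs_mul,
    abs_of_nonneg (by positivity)]
  gcongr

lemma trigPoly_sub_le_trigPoly_weight {n m : ℕ} (hnm : n < m) (p : ℕ → ℝ) (θ : ℝ) :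
    trigPoly n p θ - n / (m - n) * ∑ d ∈ Icc (-(n : ℤ)) n, |p d.natAbs|
      ≤ trigPoly n (fun d => m / (m - d) * p d) θ := by
  have hdiff := abs_trigPoly_le n ((fun d => m / (m - d) * p d) - p) θ
  rw [← trigPoly_sub] at hdiff
  have hweights : ∑ d ∈ Icc (-(n : ℤ)) n, |m / (m - d.natAbs) * p d.natAbs - p d.natAbs|
      ≤ n / (m - n) * ∑ d ∈ Icc (-(n : ℤ)) n, |p d.natAbs| := by
    rw [mul_sum]
    exact sum_le_sum fun d hd =>
      abs_div_sub_mul_sub_self_le hnm (by simp only [mem_Icc] at hd; omega) _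
  simp only [Pi.sub_apply] at hdiff
  linarith [neg_abs_le (trigPoly n (fun d => m / (m - d) * p d) θ - trigPoly n p θ)]

lemma iInf_trigPoly_sub_le_iInf_eigenvalues_Pmat {n m : ℕ} (hnm : n < m) (p : ℕ → ℝ)
    (hA : (Pmat n m p).IsHermitian) :
    (⨅ θ, trigPoly n p θ) - n / (m - n) * ∑ d ∈ Icc (-(n : ℤ)) n, |p d.natAbs|
      ≤ ⨅ i, hA.eigenvalues i := by
  have : Nonempty (Fin m) := ⟨⟨0, by omega⟩⟩
  refine le_ciInf fun i => hA.le_eigenvalues_of_forall_le_dotProduct (fun x => ?_) i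
  rw [Pmat_eq_bandedToeplitz]
  refine le_dotProduct_bandedToeplitz (fun θ => ?_) x
  exact (sub_le_sub_right (ciInf_le (bddBelow_range_trigPoly n p) θ) _).trans
    (trigPoly_sub_le_trigPoly_weight hnm p θ)

/-- `λ_min(P_m) → min_θ p(θ)` as `m → ∞`. -/
theorem stmt4 (n : ℕ) (p : ℕ → ℝ)
    (hA : ∀ m : ℕ, (Pmat n m p).IsHermitian) :
    Tendsto (fun m : ℕ => ⨅ i : Fin m, (hA m).eigenvalues i) atTop
      (𝓝 (⨅ θ : ℝ, trigPoly n p θ)) := by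
  set S := ∑ d ∈ Icc (-(n : ℤ)) n, |p d.natAbs|
  have hgap : Tendsto (fun m : ℕ => (n : ℝ) / (m - n) * S) atTop (𝓝 0) := by
    have hden : Tendsto (fun m : ℕ => (m : ℝ) - n) atTop atTop :=
      tendsto_atTop_add_const_right _ _ tendsto_natCast_atTop_atTop
    simpa using (tendsto_const_nhds.div_atTop hden).mul_const S
  refine tendsto_of_tendsto_of_tendsto_of_le_of_le' (by simpa using tendsto_const_nhds.sub hgap)
    tendsto_const_nhds ?_ ?_
  · filter_upwards [eventually_gt_atTop n] with m hm
    exact iInf_trigPoly_sub_le_iInf_eigenvalues_Pmat hm p (hA m)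
  · filter_upwards [eventually_gt_atTop n] with m hm
    exact le_ciInf (iInf_eigenvalues_Pmat_le_trigPoly hm p (hA m))
end

section
/- The trigonometric polynomial p(θ) = 2 + 2cos θ + (8/5)cos 2θ is strictly positive for all real θ, yet the associated 3×3 weighted Toeplitz matrix P₃ = [[2, 3/2, 12/5], [3/2, 2, 3/2], [12/5, 3/2, 2]] is not positive definite: its minimum eigenvalue equals -2/5. -/
/-!
With `c = cos θ`, `p(θ) = (16/5)c² + 2c + 2/5`, a quadratic in `c` with negative discriminant.
The characteristic polynomial of `P₃` factors as `(λ + 2/5)(λ² - (32/5)λ + 43/10)`, and the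
quadratic factor has only positive roots, so `-2/5` is the least eigenvalue; the eigenvector
`(1, 0, -1)` already shows that `P₃` is not positive definite.
-/

open Matrix Real

theorem Matrix.IsHermitian.iInf_eigenvalues_eq_of_isLeast {𝕜 n : Type*} [RCLike 𝕜] [Fintype n]
    [DecidableEq n] {A : Matrix n n 𝕜} (hA : A.IsHermitian) {μ : ℝ}
    (h : IsLeast (spectrum ℝ A) μ) : ⨅ i, hA.eigenvalues i = μ := by
  rw [hA.spectrum_real_eq_range_eigenvalues] at h
  obtain ⟨i, -⟩ := h.1
  have : Nonempty n := ⟨i⟩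
  exact h.isGLB.ciInf_eq

lemma two_add_two_mul_cos_add_cos_two_mul_pos (θ : ℝ) :
    0 < 2 + 2 * cos θ + (8/5) * cos (2 * θ) := by
  rw [cos_two_mul]
  nlinarith [sq_nonneg (cos θ + 5/16)]

local notation "P₃" => !![(2 : ℝ), 3/2, 12/5; 3/2, 2, 3/2; 12/5, 3/2, 2]

lemma det_algebraMap_sub_P₃ (l : ℝ) :
    (algebraMap ℝ (Matrix (Fin 3) (Fin 3) ℝ) l - P₃).det =
      (l + 2/5) * (l ^ 2 - 32/5 * l + 43/10) := by
  rw [det_fin_three]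
  simp only [Matrix.sub_apply, algebraMap_matrix_apply, of_apply, cons_val', cons_val_zero, cons_val_one,
    cons_val, cons_val_fin_one, Algebra.algebraMap_self, RingHom.id_apply, Fin.reduceEq, Fin.isValue,
    if_true, if_false]
  ring

lemma mem_spectrum_P₃_iff (l : ℝ) :
    l ∈ spectrum ℝ P₃ ↔ (l + 2/5) * (l ^ 2 - 32/5 * l + 43/10) = 0 := by
  rw [spectrum.mem_iff, isUnit_iff_isUnit_det, isUnit_iff_ne_zero, not_not,
    det_algebraMap_sub_P₃]

lemma isLeast_spectrum_P₃ : IsLeast (spectrum ℝ P₃) (-2/5) := by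
  refine ⟨(mem_spectrum_P₃_iff _).2 (by norm_num), fun l hl => ?_⟩
  rcases mul_eq_zero.1 ((mem_spectrum_P₃_iff l).1 hl) with h | h
  · linarith
  · nlinarith [sq_nonneg (l - 16/5)]

lemma not_posDef_P₃ : ¬ (P₃).PosDef := fun h => by
  have := h.dotProduct_mulVec_pos (x := ![1, 0, -1]) (by simp [funext_iff, Fin.forall_fin_succ])
  simp only [dotProduct, mulVec, Fin.sum_univ_three, of_apply, cons_val', cons_val_zero,
    cons_val_one, cons_val, cons_val_fin_one, Pi.star_apply, star_trivial, Fin.isValue] at this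
  linarith

/-- `p(θ) = 2 + 2cos θ + (8/5)cos 2θ` is strictly positive, yet the associated
weighted Toeplitz matrix `P₃` is not positive definite: `λ_min(P₃) = -2/5`. -/
theorem stmt6 :
    (∀ θ : ℝ, 0 < 2 + 2 * Real.cos θ + (8/5) * Real.cos (2 * θ)) ∧
    ¬ (!![(2 : ℝ), 3/2, 12/5; 3/2, 2, 3/2; 12/5, 3/2, 2]).PosDef ∧
    (∀ hA : (!![(2 : ℝ), 3/2, 12/5; 3/2, 2, 3/2; 12/5, 3/2, 2]).IsHermitian,
      (⨅ i : Fin 3, hA.eigenvalues i) = -2/5) :=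
  ⟨two_add_two_mul_cos_add_cos_two_mul_pos, not_posDef_P₃,
    fun hA => hA.iInf_eigenvalues_eq_of_isLeast isLeast_spectrum_P₃⟩
end

section
/- Let c(z) and d(z) be monic real polynomials of degree n with c Schur stable (all roots in the open unit disk). If the trigonometric polynomial p^{c,d}(θ) = c(e^{-iθ})d(e^{iθ}) + c(e^{iθ})d(e^{-iθ}) is strictly positive for all θ, then d is Schur stable. -/
open Polynomial Complex ComplexConjugate

/-!
Reversing the polynomials, `C w = wⁿ c(1/w)` and `D w = wⁿ d(1/w)`, turns the exterior of the
unit disk into the closed unit disk. Since `c` is Schur stable, `C` has no zero there, so `D / C`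
is holomorphic on a neighbourhood of the closed disk. On the unit circle `1/w = conj w`, and the
hypothesis says exactly that `Re (d / c) > 0` there, hence `Re (D / C) > 0` on the circle. By the
minimum principle for the harmonic function `Re (D / C)` it stays positive on the whole closed
disk, so `D` has no zero there, i.e. `d` has no zero outside the open unit disk.
-/

namespace Polynomial

theorem aeval_reflect_eq_pow_mul_aeval_inv {R K : Type*} [CommSemiring R] [Field K] [Algebra R K]
    (p : R[X]) {n : ℕ} (hp : p.natDegree ≤ n) {w : K} (hw : w ≠ 0) :
    aeval w (reflect n p) = w ^ n * aeval w⁻¹ p := by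
  have : Invertible w⁻¹ := invertibleOfNonzero (inv_ne_zero hw)
  have h := eval₂_reflect_mul_pow (algebraMap R K) w⁻¹ n p hp
  rw [invOf_eq_inv, inv_inv] at h
  rw [aeval_def, aeval_def, ← h, mul_left_comm, ← mul_pow, mul_inv_cancel₀ hw, one_pow,
    mul_one]

theorem aeval_reflect_ne_zero_of_norm_le_one {p : ℝ[X]} (hp : p ≠ 0) {n : ℕ}
    (hpn : p.natDegree = n) (hroots : ∀ z : ℂ, aeval z p = 0 → ‖z‖ < 1) {w : ℂ}
    (hw : ‖w‖ ≤ 1) : aeval w (reflect n p) ≠ 0 := by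
  rcases eq_or_ne w 0 with rfl | hw0
  · rw [← coeff_zero_eq_aeval_zero', coeff_reflect, revAt_le n.zero_le, Nat.sub_zero, ← hpn]
    simpa using hp
  · rw [aeval_reflect_eq_pow_mul_aeval_inv p hpn.le hw0]
    refine mul_ne_zero (pow_ne_zero n hw0) fun h => ?_
    have := hroots w⁻¹ h
    rw [norm_inv] at this
    exact (one_le_inv₀ (norm_pos_iff.mpr hw0)).mpr hw |>.not_gt this

end Polynomial

theorem Complex.re_div_pos_of_re_mul_conj_pos {a b : ℂ} (h : 0 < (a * conj b).re) :
    0 < (a / b).re := by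
  have hb : b ≠ 0 := by rintro rfl; simp at h
  rw [div_eq_mul_inv, inv_def, ← mul_assoc, re_mul_ofReal]
  exact mul_pos h (inv_pos.mpr (normSq_pos.mpr hb))

theorem DiffContOnCl.re_pos_of_forall_mem_frontier {E : Type*} [NormedAddCommGroup E]
    [NormedSpace ℂ E] [Nontrivial E] [FiniteDimensional ℂ E] {f : E → ℂ} {U : Set E}
    (hU : Bornology.IsBounded U) (hf : DiffContOnCl ℂ f U)
    (h : ∀ z ∈ frontier U, 0 < (f z).re) : ∀ z ∈ closure U, 0 < (f z).re := by
  intro z hz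
  -- `‖exp (-f)‖ = exp (-Re f)`, so maximum modulus for `exp (-f)` is minimum for `Re f`.
  have hexp : DiffContOnCl ℂ (fun z => exp (-f z)) U := ⟨hf.1.neg.cexp, hf.2.neg.cexp⟩
  obtain ⟨w, hw, hmax⟩ :=
    exists_mem_frontier_isMaxOn_norm hU (closure_nonempty_iff.mp ⟨z, hz⟩) hexp
  have hle : Real.exp (-(f z).re) ≤ Real.exp (-(f w).re) := by
    simpa [norm_exp] using hmax hz
  linarith [h w hw, Real.exp_le_exp.mp hle]

theorem re_aeval_div_pos_of_norm_eq_one {c d : ℝ[X]}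
    (hpos : ∀ θ : ℝ,
      0 < ((aeval (exp (-(θ : ℂ) * I)) c) * (aeval (exp ((θ : ℂ) * I)) d) +
           (aeval (exp ((θ : ℂ) * I)) c) * (aeval (exp (-(θ : ℂ) * I)) d)).re)
    {u : ℂ} (hu : ‖u‖ = 1) : 0 < (aeval u d / aeval u c).re := by
  have hexp : exp ((arg u : ℂ) * I) = u := by
    simpa [hu] using norm_mul_exp_arg_mul_I u
  have hexp_neg : exp (-(arg u : ℂ) * I) = conj u := by
    rw [neg_mul, exp_neg, hexp, inv_eq_conj hu]
  have h := hpos (arg u)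
  rw [hexp, hexp_neg, aeval_conj, aeval_conj] at h
  refine re_div_pos_of_re_mul_conj_pos ?_
  have hre : ∀ x y : ℂ, (conj x * y + x * conj y).re = 2 * (y * conj x).re := by
    intro x y; simp only [add_re, mul_re, conj_re, conj_im]; ring
  linarith [hre (aeval u c) (aeval u d)]

open Metric in
theorem stmt8_general (n : ℕ) (c d : Polynomial ℝ)
    (hcd : c.natDegree = n)
    (hdd : d.natDegree = n)
    (hcstab : ∀ z : ℂ, Polynomial.aeval z c = 0 → ‖z‖ < 1)
    (hpos : ∀ θ : ℝ,
      0 < ((Polynomial.aeval (Complex.exp (-(θ : ℂ) * Complex.I)) c) *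
             (Polynomial.aeval (Complex.exp ((θ : ℂ) * Complex.I)) d) +
           (Polynomial.aeval (Complex.exp ((θ : ℂ) * Complex.I)) c) *
             (Polynomial.aeval (Complex.exp (-(θ : ℂ) * Complex.I)) d)).re) :
    ∀ z : ℂ, Polynomial.aeval z d = 0 → ‖z‖ < 1 := by
  intro z hz
  by_contra! hz1
  have hz0 : z ≠ 0 := norm_pos_iff.mp (by linarith)
  have hcircle := fun u (hu : ‖u‖ = 1) => re_aeval_div_pos_of_norm_eq_one hpos hu
  have hc0 : c ≠ 0 := by rintro rfl; simpa using hcircle 1 norm_one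
  have hC : ∀ w ∈ closedBall (0 : ℂ) 1, aeval w (reflect n c) ≠ 0 := fun w hw =>
    aeval_reflect_ne_zero_of_norm_le_one hc0 hcd hcstab (mem_closedBall_zero_iff.mp hw)
  set g : ℂ → ℂ := fun w => aeval w (reflect n d) / aeval w (reflect n c)
  have hg : DiffContOnCl ℂ g (ball 0 1) := by
    refine DifferentiableOn.diffContOnCl ?_
    rw [closure_ball 0 one_ne_zero]
    exact (reflect n d).differentiable_aeval.differentiableOn.div
      (reflect n c).differentiable_aeval.differentiableOn hC
  have hsphere : ∀ w ∈ frontier (ball (0 : ℂ) 1), 0 < (g w).re := by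
    rw [frontier_ball 0 one_ne_zero]
    intro w hw
    have hw1 : ‖w‖ = 1 := mem_sphere_zero_iff_norm.mp hw
    have hw0 : w ≠ 0 := norm_ne_zero_iff.mp (by simp [hw1])
    simp only [g, aeval_reflect_eq_pow_mul_aeval_inv _ hdd.le hw0,
      aeval_reflect_eq_pow_mul_aeval_inv _ hcd.le hw0, mul_div_mul_left _ _ (pow_ne_zero n hw0)]
    exact hcircle w⁻¹ (by simp [hw1])
  have hzinv : z⁻¹ ∈ closure (ball (0 : ℂ) 1) := by
    rw [closure_ball 0 one_ne_zero, mem_closedBall_zero_iff, norm_inv]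
    exact inv_le_one_of_one_le₀ hz1
  have := hg.re_pos_of_forall_mem_frontier isBounded_ball hsphere z⁻¹ hzinv
  simp [g, aeval_reflect_eq_pow_mul_aeval_inv _ hdd.le (inv_ne_zero hz0), hz] at this

/-- If `c` is a Schur stable monic real polynomial of degree `n`, `d` is monic of degree `n`,
and `p^{c,d}(θ) = c(e^{-iθ})d(e^{iθ}) + c(e^{iθ})d(e^{-iθ}) > 0` for all `θ`,
then `d` is Schur stable. -/
theorem stmt8 (n : ℕ) (c d : Polynomial ℝ)
    (hcm : c.Monic) (hcd : c.natDegree = n)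
    (hdm : d.Monic) (hdd : d.natDegree = n)
    (hcstab : ∀ z : ℂ, Polynomial.aeval z c = 0 → ‖z‖ < 1)
    (hpos : ∀ θ : ℝ,
      0 < ((Polynomial.aeval (Complex.exp (-(θ : ℂ) * Complex.I)) c) *
             (Polynomial.aeval (Complex.exp ((θ : ℂ) * Complex.I)) d) +
           (Polynomial.aeval (Complex.exp ((θ : ℂ) * Complex.I)) c) *
             (Polynomial.aeval (Complex.exp (-(θ : ℂ) * Complex.I)) d)).re) :
    ∀ z : ℂ, Polynomial.aeval z d = 0 → ‖z‖ < 1 :=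
  stmt8_general n c d hcd hdd hcstab hpos
end

section
/- Let d(z) = d₀ + d₁z + z² be a monic real quadratic. If the 3×3 matrix [[2, (3/2)d₁, 3d₀], [(3/2)d₁, 2, (3/2)d₁], [3d₀, (3/2)d₁, 2]] is positive definite, then d is Schur stable, i.e., both roots of d lie in the open unit disk. -/
/-!
The quadratic form of the matrix, evaluated at `(1, 0, -1)` and `(1, ±1, 1)`, gives `4 - 6 d₀ > 0`
and `6 (1 ± d₁ + d₀) > 0`, i.e. the Jury conditions `d₀ < 1`, `|d₁| < 1 + d₀`. Under these, a root
`z = x + iy` satisfies `y (2x + d₁) = 0`: either `z` is real and trapped in `(-1, 1)` because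
`d(±1) > 0`, or `x = -d₁ / 2` and then `|z|² = d₀ < 1`.
-/

open Matrix Complex

noncomputable def lmiMatrix (d₀ d₁ : ℝ) : Matrix (Fin 3) (Fin 3) ℝ :=
  !![2, (3/2) * d₁, 3 * d₀;
     (3/2) * d₁, 2, (3/2) * d₁;
     3 * d₀, (3/2) * d₁, 2]

lemma lmiMatrix_quadForm (d₀ d₁ a b c : ℝ) :
    ![a, b, c] ⬝ᵥ (lmiMatrix d₀ d₁ *ᵥ ![a, b, c]) =
      2 * (a ^ 2 + b ^ 2 + c ^ 2) + 3 * d₁ * (a * b + b * c) + 6 * d₀ * (a * c) := by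
  simp only [dotProduct, mulVec, lmiMatrix, of_apply, cons_val', cons_val_fin_one,
    Fin.sum_univ_three, cons_val_zero, cons_val_one, cons_val]
  ring

lemma lmiMatrix_quadForm_pos {d₀ d₁ : ℝ} (hPD : (lmiMatrix d₀ d₁).PosDef) (a b c : ℝ)
    (ha : a ≠ 0) :
    0 < 2 * (a ^ 2 + b ^ 2 + c ^ 2) + 3 * d₁ * (a * b + b * c) + 6 * d₀ * (a * c) := by
  rw [← lmiMatrix_quadForm]
  simpa using hPD.dotProduct_mulVec_pos (x := ![a, b, c]) fun h => ha (congrFun h 0)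

lemma schur_conditions_of_posDef_lmiMatrix {d₀ d₁ : ℝ} (hPD : (lmiMatrix d₀ d₁).PosDef) :
    d₀ < 1 ∧ |d₁| < 1 + d₀ := by
  have h₁ := lmiMatrix_quadForm_pos hPD 1 0 (-1) one_ne_zero
  have h₂ := lmiMatrix_quadForm_pos hPD 1 1 1 one_ne_zero
  have h₃ := lmiMatrix_quadForm_pos hPD 1 (-1) 1 one_ne_zero
  exact ⟨by linarith, abs_lt.2 ⟨by linarith, by linarith⟩⟩

lemma abs_lt_one_of_quadratic_eq_zero {d₀ d₁ r : ℝ} (h₀ : d₀ < 1) (h₁ : |d₁| < 1 + d₀)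
    (hr : r ^ 2 + d₁ * r + d₀ = 0) : |r| < 1 := by
  obtain ⟨h₁', h₁''⟩ := abs_lt.1 h₁
  -- `r² + d₁ r + d₀ = (r ∓ 1)(r ± 1 + d₁) + (1 ± d₁ + d₀)` is positive for `±r ≥ 1`
  refine abs_lt.2 ⟨?_, ?_⟩ <;> by_contra! h <;> nlinarith

lemma norm_lt_one_of_quadratic_eq_zero {d₀ d₁ : ℝ} (h₀ : d₀ < 1) (h₁ : |d₁| < 1 + d₀) {z : ℂ}
    (hz : z ^ 2 + d₁ * z + d₀ = 0) : ‖z‖ < 1 := by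
  have hre : z.re * z.re - z.im * z.im + d₁ * z.re + d₀ = 0 := by
    simpa [sq] using congrArg re hz
  have him : z.im * (2 * z.re + d₁) = 0 := by
    linear_combination (by simpa [sq] using congrArg im hz :
      z.re * z.im + z.im * z.re + d₁ * z.im = 0)
  rw [← sq_lt_one_iff₀ (norm_nonneg z), Complex.sq_norm, normSq_apply]
  rcases mul_eq_zero.1 him with hreal | hvertex
  · rw [hreal, mul_zero, add_zero, ← sq, sq_lt_one_iff_abs_lt_one]
    exact abs_lt_one_of_quadratic_eq_zero h₀ h₁ (by rw [hreal] at hre; linear_combination hre)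
  · have hnormSq : z.re * z.re + z.im * z.im = d₀ := by
      linear_combination z.re * hvertex - hre
    linarith

/-- If the 3×3 LMI matrix (central polynomial `c(z) = z²`) is positive definite, then
`d(z) = d₀ + d₁z + z²` is Schur stable. -/
theorem stmt13 (d₀ d₁ : ℝ)
    (hPD : (!![(2 : ℝ), (3/2) * d₁, 3 * d₀;
               (3/2) * d₁, 2, (3/2) * d₁;
               3 * d₀, (3/2) * d₁, 2]).PosDef) :
    ∀ z : ℂ, z ^ 2 + (d₁ : ℂ) * z + (d₀ : ℂ) = 0 → ‖z‖ < 1 := by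
  obtain ⟨h₀, h₁⟩ := schur_conditions_of_posDef_lmiMatrix (d₀ := d₀) (d₁ := d₁) hPD
  exact fun z hz => norm_lt_one_of_quadratic_eq_zero h₀ h₁ hz
end

section
/- Let d(z) = d₀ + d₁z + z² be monic real quadratic. If the 4×4 matrix [[2, (4/3)d₁, 2d₀, 0], [(4/3)d₁, 2, (4/3)d₁, 2d₀], [2d₀, (4/3)d₁, 2, (4/3)d₁], [0, 2d₀, (4/3)d₁, 2]] is positive definite, then |d₀| < 1 and |d₁| < 1 + d₀ (equivalently, d is Schur stable). -/
/-!
The matrix is the symmetric Toeplitz matrix with first row `(2, 4d₁/3, 2d₀, 0)`, and only four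
values of its quadratic form are needed: the vectors `(1, 0, ∓1, 0)` give `|d₀| < 1`, and the
constant and alternating vectors `(1, ±1, 1, ±1)` give `|d₁| < 1 + d₀`.
-/

open Matrix

def symmToeplitz4 (t₀ t₁ t₂ t₃ : ℝ) : Matrix (Fin 4) (Fin 4) ℝ :=
  !![t₀, t₁, t₂, t₃;
     t₁, t₀, t₁, t₂;
     t₂, t₁, t₀, t₁;
     t₃, t₂, t₁, t₀]

theorem dotProduct_symmToeplitz4_mulVec (t₀ t₁ t₂ t₃ a b c e : ℝ) :
    ![a, b, c, e] ⬝ᵥ symmToeplitz4 t₀ t₁ t₂ t₃ *ᵥ ![a, b, c, e] =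
      t₀ * (a ^ 2 + b ^ 2 + c ^ 2 + e ^ 2) + 2 * t₁ * (a * b + b * c + c * e)
        + 2 * t₂ * (a * c + b * e) + 2 * t₃ * (a * e) := by
  simp [symmToeplitz4, mulVec, dotProduct, Fin.sum_univ_four]
  ring

theorem Matrix.PosDef.symmToeplitz4_bounds {t₀ t₁ t₂ t₃ : ℝ}
    (h : (symmToeplitz4 t₀ t₁ t₂ t₃).PosDef) :
    |t₂| < t₀ ∧ |3 * t₁ + t₃| < 2 * (t₀ + t₂) := by
  have pos (b c e : ℝ) : 0 < t₀ * (1 + b ^ 2 + c ^ 2 + e ^ 2) + 2 * t₁ * (b + b * c + c * e)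
      + 2 * t₂ * (c + b * e) + 2 * t₃ * e := by
    have := h.dotProduct_mulVec_pos (x := ![1, b, c, e]) fun h0 => by simpa using congrFun h0 0
    rwa [star_trivial, dotProduct_symmToeplitz4_mulVec, one_pow, one_mul, one_mul, one_mul] at this
  have h₁ := pos 0 (-1) 0
  have h₂ := pos 0 1 0
  have h₃ := pos 1 1 1
  have h₄ := pos (-1) 1 (-1)
  norm_num at h₁ h₂ h₃ h₄
  exact ⟨abs_lt.2 ⟨by linarith, by linarith⟩, abs_lt.2 ⟨by linarith, by linarith⟩⟩

/-- If the 4×4 LMI matrix (central polynomial `c(z) = z²`) is positive definite, then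
`|d₀| < 1` and `|d₁| < 1 + d₀`, i.e. `z² + d₁z + d₀` is Schur stable. -/
theorem stmt14 (d₀ d₁ : ℝ)
    (hPD : (!![(2 : ℝ), (4/3) * d₁, 2 * d₀, 0;
               (4/3) * d₁, 2, (4/3) * d₁, 2 * d₀;
               2 * d₀, (4/3) * d₁, 2, (4/3) * d₁;
               0, 2 * d₀, (4/3) * d₁, 2]).PosDef) :
    |d₀| < 1 ∧ |d₁| < 1 + d₀ := by
  obtain ⟨h₀, h₁⟩ :=
    hPD.symmToeplitz4_bounds (t₀ := 2) (t₁ := 4/3 * d₁) (t₂ := 2 * d₀) (t₃ := 0)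
  rw [abs_lt] at h₀ h₁
  exact ⟨abs_lt.2 ⟨by linarith, by linarith⟩, abs_lt.2 ⟨by linarith, by linarith⟩⟩
end
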